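/- arXiv:2406.02937 — 2 statements merged into one kernel-verified Lean document; each statement's English description precedes it below -/
import Mathlib

section
/- For all natural numbers k, m, n, (n+1)·F(k·n + 2m) = Σ_{i=0}^{n} L(k·i + m)·F(k·(n−i) + m). -/
/-!
Both `F` and `L` satisfy the same second-order recurrence, so the addition formula
`L p * F q + F p * L q = 2 * F (p + q)` follows by induction on `q` once it holds for `q = 0, 1`.
Pairing the term `i` of the sum with the term `n - i` and applying this formula, each pair
contributes `2 * F (k * n + 2 * m)`, and there are `n + 1` terms.
-/

noncomputable def genFib (a b : ℝ) : ℕ → ℝ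
  | 0 => 0
  | 1 => 1
  | n + 2 => a * genFib a b (n + 1) + b * genFib a b n

noncomputable def genLuc (a b : ℝ) : ℕ → ℝ
  | 0 => 2
  | 1 => a
  | n + 2 => a * genLuc a b (n + 1) + b * genLuc a b n

section

variable (a b : ℝ)

@[simp] lemma genFib_zero : genFib a b 0 = 0 := rfl

@[simp] lemma genFib_one : genFib a b 1 = 1 := rfl

lemma genFib_add_two (n : ℕ) :
    genFib a b (n + 2) = a * genFib a b (n + 1) + b * genFib a b n := rfl

@[simp] lemma genLuc_zero : genLuc a b 0 = 2 := rfl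

@[simp] lemma genLuc_one : genLuc a b 1 = a := rfl

lemma genLuc_add_two (n : ℕ) :
    genLuc a b (n + 2) = a * genLuc a b (n + 1) + b * genLuc a b n := rfl

lemma genLuc_add_mul_genFib (p : ℕ) :
    genLuc a b p + a * genFib a b p = 2 * genFib a b (p + 1) := by
  induction p using Nat.twoStepInduction with
  | zero => simp
  | one => show a + a * 1 = 2 * (a * 1 + b * 0); ring
  | more p ih₀ ih₁ =>
    rw [genLuc_add_two, genFib_add_two, genFib_add_two a b (p + 1)]
    linear_combination a * ih₁ + b * ih₀

lemma genLuc_mul_genFib_add_genFib_mul_genLuc (p q : ℕ) :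
    genLuc a b p * genFib a b q + genFib a b p * genLuc a b q = 2 * genFib a b (p + q) := by
  induction q using Nat.twoStepInduction with
  | zero => simp [mul_comm]
  | one => simpa [mul_comm] using genLuc_add_mul_genFib a b p
  | more q ih₀ ih₁ =>
    rw [genFib_add_two, genLuc_add_two, ← add_assoc, genFib_add_two]
    linear_combination a * ih₁ + b * ih₀

end

lemma Finset.Nat.sum_antidiagonal_eq_mul_of_add_swap {K : Type*} [Field K] [CharZero K]
    (n : ℕ) (f : ℕ → ℕ → K) (c : K) (hf : ∀ i j, i + j = n → f i j + f j i = 2 * c) :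
    ∑ p ∈ antidiagonal n, f p.1 p.2 = (n + 1) * c := by
  have hdouble : 2 * ∑ p ∈ antidiagonal n, f p.1 p.2 = 2 * ((n + 1) * c) :=
    calc 2 * ∑ p ∈ antidiagonal n, f p.1 p.2
        = ∑ p ∈ antidiagonal n, (f p.1 p.2 + f p.2 p.1) := by
          rw [two_mul, sum_add_distrib]
          congr 1
          exact (sum_antidiagonal_swap (f := fun p ↦ f p.1 p.2)).symm
      _ = ∑ _p ∈ antidiagonal n, 2 * c :=
          sum_congr rfl fun p hp ↦ hf p.1 p.2 (mem_antidiagonal.mp hp)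
      _ = 2 * ((n + 1) * c) := by
          simp only [sum_const, card_antidiagonal, nsmul_eq_mul, Nat.cast_add, Nat.cast_one]; ring
  exact mul_left_cancel₀ two_ne_zero hdouble

theorem genFib_sum_identity (a b : ℝ) (k m n : ℕ) :
    (n + 1 : ℝ) * genFib a b (k * n + 2 * m) =
      ∑ i ∈ Finset.range (n + 1),
        genLuc a b (k * i + m) * genFib a b (k * (n - i) + m) := by
  let f i j := genLuc a b (k * i + m) * genFib a b (k * j + m)
  have hf (i j : ℕ) (hij : i + j = n) :
      f i j + f j i = 2 * genFib a b (k * n + 2 * m) := by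
    simp only [f]
    rw [mul_comm (genLuc a b (k * j + m)), genLuc_mul_genFib_add_genFib_mul_genLuc, ← hij]
    congr 2
    ring
  rw [← Finset.Nat.sum_antidiagonal_eq_sum_range_succ f,
    Finset.Nat.sum_antidiagonal_eq_mul_of_add_swap n f _ hf]
end

section
/- For all natural numbers k, m, n, 2^n · F(k·n + 2m) = Σ_{i=0}^{n} C(n, i)·F(k·i + m)·L(k·(n−i) + m), where C(n, i) denotes the binomial coefficient. -/
open Finset

theorem two_mul_sum_range_choose_of_add_swap {R : Type*} [CommSemiring R] (f : ℕ → ℕ → R)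
    (n : ℕ) (c : R) (h : ∀ i j, i + j = n → f i j + f j i = c) :
    2 * ∑ i ∈ range (n + 1), (n.choose i : R) * f i (n - i) = 2 ^ n * c := by
  have reflect : ∑ i ∈ range (n + 1), (n.choose i : R) * f i (n - i) =
      ∑ i ∈ range (n + 1), (n.choose i : R) * f (n - i) i := by
    rw [← sum_range_reflect]
    refine sum_congr rfl fun i hi => ?_
    have hi : i ≤ n := Nat.lt_succ_iff.mp (mem_range.mp hi)
    rw [Nat.add_sub_cancel, Nat.sub_sub_self hi, Nat.choose_symm hi]
  calc 2 * ∑ i ∈ range (n + 1), (n.choose i : R) * f i (n - i)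
      = ∑ i ∈ range (n + 1), (n.choose i : R) * (f i (n - i) + f (n - i) i) := by
        rw [two_mul]
        nth_rewrite 2 [reflect]
        simp only [mul_add, sum_add_distrib]
    _ = ∑ i ∈ range (n + 1), (n.choose i : R) * c := by
        refine sum_congr rfl fun i hi => ?_
        rw [h i (n - i) (Nat.add_sub_cancel' (Nat.lt_succ_iff.mp (mem_range.mp hi)))]
    _ = 2 ^ n * c := by
        rw [← sum_mul, ← Nat.cast_sum, Nat.sum_range_choose, Nat.cast_pow, Nat.cast_ofNat]

section

variable (a b : ℝ)

theorem genLuc_eq_two_mul_genFib_succ_sub (n : ℕ) :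
    genLuc a b n = 2 * genFib a b (n + 1) - a * genFib a b n := by
  induction n using Nat.twoStepInduction with
  | zero => simp [genFib, genLuc]
  | one => simp [genFib, genLuc]; ring
  | more n ih₁ ih₂ =>
    simp only [genLuc, genFib] at ih₁ ih₂ ⊢
    linear_combination b * ih₁ + a * ih₂

theorem two_mul_genFib_add (p q : ℕ) :
    2 * genFib a b (p + q) = genFib a b p * genLuc a b q + genLuc a b p * genFib a b q := by
  induction q using Nat.twoStepInduction with
  | zero => simp [genFib, genLuc]; ring
  | one =>
    simp only [genFib, genLuc, genLuc_eq_two_mul_genFib_succ_sub]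
    ring
  | more q ih₁ ih₂ =>
    rw [← add_assoc] at ih₂ ⊢
    simp only [genFib, genLuc] at ih₂ ⊢
    linear_combination b * ih₁ + a * ih₂

end

theorem genFib_binomial_identity (a b : ℝ) (k m n : ℕ) :
    (2 : ℝ) ^ n * genFib a b (k * n + 2 * m) =
      ∑ i ∈ Finset.range (n + 1),
        (n.choose i : ℝ) * genFib a b (k * i + m) * genLuc a b (k * (n - i) + m) := by
  have pair : ∀ i j, i + j = n →
      genFib a b (k * i + m) * genLuc a b (k * j + m) +
        genFib a b (k * j + m) * genLuc a b (k * i + m) = 2 * genFib a b (k * n + 2 * m) := by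
    rintro i j rfl
    rw [show k * (i + j) + 2 * m = (k * i + m) + (k * j + m) by ring, two_mul_genFib_add]
    ring
  have twice := two_mul_sum_range_choose_of_add_swap
    (fun i j => genFib a b (k * i + m) * genLuc a b (k * j + m)) n _ pair
  simp only [← mul_assoc] at twice
  linarith
end
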